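/- arXiv:2601.22829 — 3 statements merged into one kernel-verified Lean document; each statement's English description precedes it below -/
import Mathlib

section
/- Let e₁, …, e_m be measurable real-valued functions on a measure space (S, μ) with μ(S) > 0, m ≥ 2, such that ∫_S b · eᵣ · e_s dμ = C(b) δ_{rs} for every bounded measurable function b : S → ℝ (with C(b) ∈ ℝ depending on b). Then eᵣ(x) e_s(x) = 0 for r ≠ s and e₁(x)² = e₂(x)² = … = e_m(x)² for almost every x ∈ S. In particular, if m ≥ 2 then e₁ e₂ = 0 and e₁² = e₂² a.e., hence e₁ = e₂ = … = e_m = 0 almost everywhere on S. -/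
/-!
Testing the hypothesis against indicator weights `b = 𝟙_s` shows that `eᵣ e_s` (for `r ≠ s`) and
`eᵣ² - e_s²` have vanishing integral over every measurable set, so they vanish a.e. Taking any
`s ≠ r`, the pointwise relations `eᵣ e_s = 0` and `eᵣ² = e_s²` force `eᵣ = 0`.
-/

open MeasureTheory

theorem eq_zero_of_mul_eq_zero_of_sq_eq_sq {M₀ : Type*} [MonoidWithZero M₀] [NoZeroDivisors M₀]
    {a b : M₀} (hab : a * b = 0) (hsq : a ^ 2 = b ^ 2) : a = 0 := by
  rcases mul_eq_zero.1 hab with ha | hb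
  · exact ha
  · rw [hb] at hsq
    exact pow_eq_zero_iff two_ne_zero |>.1 (hsq.trans (zero_pow two_ne_zero))

theorem ae_eq_of_forall_integral_bounded_mul_eq {α : Type*} [MeasurableSpace α] {μ : Measure α}
    {f g : α → ℝ} (hf : Integrable f μ) (hg : Integrable g μ)
    (h : ∀ b : α → ℝ, Measurable b → (∃ C, ∀ x, |b x| ≤ C) →
      ∫ x, b x * f x ∂μ = ∫ x, b x * g x ∂μ) :
    f =ᵐ[μ] g := by
  refine Integrable.ae_eq_of_forall_setIntegral_eq f g hf hg fun s hs _ => ?_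
  have hbounded : ∀ x, |s.indicator 1 x| ≤ (1 : ℝ) := fun x => by
    by_cases hx : x ∈ s <;> simp [hx]
  have key := h (s.indicator 1) (measurable_one.indicator hs) ⟨1, hbounded⟩
  simpa only [← integral_indicator hs, ← Set.indicator_mul_left, Pi.one_apply, one_mul] using key

theorem stmt10_general {α : Type*} [MeasurableSpace α] (μ : Measure α)
    (m : ℕ) (hm : 2 ≤ m) (e : Fin m → α → ℝ)
    (hL2 : ∀ r, MemLp (e r) 2 μ)
    (H : ∀ b : α → ℝ, Measurable b → (∃ C, ∀ x, |b x| ≤ C) →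
      ∃ c : ℝ, ∀ r s, ∫ x, b x * (e r x * e s x) ∂μ = if r = s then c else 0) :
    (∀ r s, r ≠ s → ∀ᵐ x ∂μ, e r x * e s x = 0) ∧
    (∀ r s, ∀ᵐ x ∂μ, (e r x) ^ 2 = (e s x) ^ 2) ∧
    (∀ r, ∀ᵐ x ∂μ, e r x = 0) := by
  have hint : ∀ r s, Integrable (fun x => e r x * e s x) μ :=
    fun r s => (hL2 r).integrable_mul (hL2 s)
  have horth : ∀ r s, r ≠ s → ∀ᵐ x ∂μ, e r x * e s x = 0 := fun r s hrs =>
    ae_eq_of_forall_integral_bounded_mul_eq (hint r s) (integrable_zero _ _ _) fun b hb hbd => by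
      obtain ⟨c, hc⟩ := H b hb hbd
      simpa [hrs] using hc r s
  have hsq : ∀ r s, ∀ᵐ x ∂μ, e r x ^ 2 = e s x ^ 2 := fun r s => by
    have hdiag := ae_eq_of_forall_integral_bounded_mul_eq (hint r r) (hint s s)
      fun b hb hbd => by
        obtain ⟨c, hc⟩ := H b hb hbd
        rw [hc, hc, if_pos rfl, if_pos rfl]
    filter_upwards [hdiag] with x hx
    simpa only [sq] using hx
  refine ⟨horth, hsq, fun r => ?_⟩
  have : Nontrivial (Fin m) := Fin.nontrivial_iff_two_le.2 hm
  obtain ⟨s, hsr⟩ := exists_ne r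
  filter_upwards [horth r s hsr.symm, hsq r s] with x hprod hsq
  exact eq_zero_of_mul_eq_zero_of_sq_eq_sq hprod hsq

/-- If `e₁, …, e_m` (`m ≥ 2`) are `L²` functions on a measure space of positive
measure such that `∫ b eᵣ e_s dμ = C(b) δ_{rs}` for every bounded measurable `b`, then
`eᵣ e_s = 0` a.e. for `r ≠ s`, the squares `eᵣ²` all coincide a.e., and hence
every `eᵣ` vanishes almost everywhere. -/
theorem stmt10 {α : Type*} [MeasurableSpace α] (μ : Measure α) (hμ : μ Set.univ ≠ 0)
    (m : ℕ) (hm : 2 ≤ m) (e : Fin m → α → ℝ)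
    (hL2 : ∀ r, MemLp (e r) 2 μ)
    (H : ∀ b : α → ℝ, Measurable b → (∃ C, ∀ x, |b x| ≤ C) →
      ∃ c : ℝ, ∀ r s, ∫ x, b x * (e r x * e s x) ∂μ = if r = s then c else 0) :
    (∀ r s, r ≠ s → ∀ᵐ x ∂μ, e r x * e s x = 0) ∧
    (∀ r s, ∀ᵐ x ∂μ, (e r x) ^ 2 = (e s x) ^ 2) ∧
    (∀ r, ∀ᵐ x ∂μ, e r x = 0) :=
  stmt10_general μ m hm e hL2 H
end

section
/- Let (X, a) be a real Hilbert space, c a continuous symmetric nonnegative bilinear form on X, and let E be defined by a(E f, φ) = c(f, φ). Suppose b ↦ A_b is a family of continuous symmetric coercive bilinear forms on X, Fréchet differentiable in b at b = 0 with A_0 = a, and define E_b by A_b(E_b f, φ) = c(f, φ). Then b ↦ E_b is Fréchet differentiable at b = 0 (in operator norm), and its derivative satisfies A'(0)[b](E f, φ) + a(E'(0)[b] f, φ) = 0 for all f, φ ∈ X. -/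
/-!
Through the Riesz isomorphism `J : X* → X`, the operators `T b := J ∘ A_b` satisfy `T 0 = 1`
and `T b ∘ E_b = J ∘ c`. Invertible operators form an open set on which inversion is
differentiable, so near `0` we have `E_b = (T b)⁻¹ ∘ J ∘ c`, and the chain rule gives the
derivative `b ↦ -T'(b) ∘ E_0`, which is the claimed identity read through `J`.
-/

open Topology ContinuousLinearMap

open scoped RealInnerProductSpace

theorem hasFDerivAt_of_eventually_mul_eq_const {𝕜 E R : Type*} [NontriviallyNormedField 𝕜]
    [NormedAddCommGroup E] [NormedSpace 𝕜 E] [NormedRing R] [NormedAlgebra 𝕜 R]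
    [HasSummableGeomSeries R] {T S : E → R} {T' : E →L[𝕜] R} {x : E} {y : R} (u : Rˣ)
    (hTx : T x = u) (hT : HasFDerivAt T T' x) (hTS : ∀ᶠ b in 𝓝 x, T b * S b = y) :
    HasFDerivAt S (-(mulLeftRight 𝕜 R ↑u⁻¹ (↑u⁻¹ * y)).comp T') x := by
  have hunit : ∀ᶠ b in 𝓝 x, IsUnit (T b) :=
    hT.continuousAt.eventually_mem (hTx ▸ Units.nhds u)
  have hS : (fun b => Ring.inverse (T b) * y) =ᶠ[𝓝 x] S := by
    filter_upwards [hunit, hTS] with b hb hbS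
    rw [← hbS, Ring.inverse_mul_cancel_left _ _ hb]
  have hinv : HasFDerivAt (fun b => Ring.inverse (T b))
      (-(mulLeftRight 𝕜 R ↑u⁻¹ ↑u⁻¹).comp T') x :=
    (hTx ▸ hasFDerivAt_ringInverse u).comp x hT
  refine (hinv.mul_const' y).congr_of_eventuallyEq hS.symm |>.congr_fderiv ?_
  ext h
  simp [mul_assoc]

theorem stmt15_general {X B : Type*} [NormedAddCommGroup X] [InnerProductSpace ℝ X]
    [CompleteSpace X] [NormedAddCommGroup B] [NormedSpace ℝ B]
    (c : X →L[ℝ] X →L[ℝ] ℝ)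
    (A : B → X →L[ℝ] X →L[ℝ] ℝ) (A' : B →L[ℝ] X →L[ℝ] X →L[ℝ] ℝ)
    (hA0 : ∀ u v, A 0 u v = ⟪u, v⟫)
    (hdiff : HasFDerivAt A A' 0)
    (V : Set B) (hV : V ∈ nhds (0 : B))
    (Efam : B → X →L[ℝ] X)
    (hEfam : ∀ b ∈ V, ∀ f φ, A b (Efam b f) φ = c f φ) :
    ∃ D : B →L[ℝ] X →L[ℝ] X, HasFDerivAt Efam D 0 ∧
      ∀ (b : B) (f φ : X), A' b (Efam 0 f) φ + ⟪D b f, φ⟫ = 0 := by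
  let J : (X →L[ℝ] ℝ) →L[ℝ] X :=
    (InnerProductSpace.toDual ℝ X).symm.toLinearIsometry.toContinuousLinearMap
  let T : B → X →L[ℝ] X := fun b => J.comp (A b)
  have hT := (hasFDerivAt_const J (0 : B)).clm_comp hdiff
  have hT0 : T 0 = ((1 : (X →L[ℝ] X)ˣ) : X →L[ℝ] X) := by
    have hA0_toDual : ∀ u, A 0 u = InnerProductSpace.toDual ℝ X u := fun u => by
      ext v; simp [hA0]
    ext u; simp [T, J, hA0_toDual]
  have hTE : ∀ᶠ b in 𝓝 0, T b * Efam b = J.comp c := by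
    filter_upwards [hV] with b hb
    have hAE : ∀ f, A b (Efam b f) = c f := fun f => ContinuousLinearMap.ext (hEfam b hb f)
    ext f; simp [T, hAE]
  have hE0 : Efam 0 = J.comp c := by simpa [hT0] using hTE.self_of_nhds
  refine ⟨_, hasFDerivAt_of_eventually_mul_eq_const 1 hT0 hT hTE, fun b f φ => ?_⟩
  simp [hE0, J]

/-- Differentiability of the Lax–Milgram solution operator: let `(X, a)` be a real
Hilbert space (`a = ⟪·,·⟫`), `c` a continuous symmetric nonnegative bilinear form, and
`b ↦ A_b` a family of continuous symmetric bilinear forms, uniformly coercive for `b`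
in a neighborhood `V` of `0`, Fréchet differentiable at `b = 0` with `A_0 = a` and
derivative `A'`. If `E_b` is defined by `A_b(E_b f, φ) = c(f, φ)`, then `b ↦ E_b` is
Fréchet differentiable at `b = 0` with derivative `D` satisfying
`A'(0)[b](E₀ f, φ) + a(D[b] f, φ) = 0` for all `f, φ`. -/
theorem stmt15 {X B : Type*} [NormedAddCommGroup X] [InnerProductSpace ℝ X]
    [CompleteSpace X] [NormedAddCommGroup B] [NormedSpace ℝ B]
    (c : X →L[ℝ] X →L[ℝ] ℝ) (hc_symm : ∀ u v, c u v = c v u) (hc_nonneg : ∀ u, 0 ≤ c u u)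
    (A : B → X →L[ℝ] X →L[ℝ] ℝ) (A' : B →L[ℝ] X →L[ℝ] X →L[ℝ] ℝ)
    (hA0 : ∀ u v, A 0 u v = ⟪u, v⟫) (hA_symm : ∀ b u v, A b u v = A b v u)
    (hdiff : HasFDerivAt A A' 0)
    (α : ℝ) (hα : 0 < α) (V : Set B) (hV : V ∈ nhds (0 : B))
    (hcoer : ∀ b ∈ V, ∀ u, α * ‖u‖ ^ 2 ≤ A b u u)
    (Efam : B → X →L[ℝ] X)
    (hEfam : ∀ b ∈ V, ∀ f φ, A b (Efam b f) φ = c f φ) :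
    ∃ D : B →L[ℝ] X →L[ℝ] X, HasFDerivAt Efam D 0 ∧
      ∀ (b : B) (f φ : X), A' b (Efam 0 f) φ + ⟪D b f, φ⟫ = 0 :=
  stmt15_general c A A' hA0 hdiff V hV Efam hEfam
end

section
/- Let Ω ⊂ ℝⁿ be a bounded C¹ domain with outward unit normal ν, ψ : ℝⁿ → ℝⁿ a C² vector field, and u, φ ∈ C²(closure(Ω)). Let F = u φ N where N is a C¹ extension of ν to a neighborhood of ∂Ω. Then ∫_Ω [∂ᵢFᵢ · div ψ − ∂_t Fᵢ · ∂ᵢψ_t] dx = ∫_{∂Ω} u φ (div ψ − ∑_r ∂_ν ψ_r ν_r) dσ, where summation over repeated indices is understood and ∂_ν ψ_r = ν·∇ψ_r. -/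
/-! Apply the divergence theorem to `G = (div ψ) F - (Dψ) F`. Its divergence is
`div F · div ψ - tr (Dψ ∘ DF)`: the second-order terms `(D(div ψ)) F` and `tr (v ↦ D²ψ v F)`
cancel by the symmetry of `D²ψ`. On `∂Ω` we have `F = uφ ν` with `‖ν‖ = 1`, so
`⟪G, ν⟫ = uφ (div ψ - ⟪Dψ ν, ν⟫)`. -/

open MeasureTheory
open scoped RealInnerProductSpace

section Divergence

variable {E : Type*} [NormedAddCommGroup E] [NormedSpace ℝ E] [FiniteDimensional ℝ E]

noncomputable def traceCLM : (E →L[ℝ] E) →L[ℝ] ℝ :=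
  LinearMap.toContinuousLinearMap (LinearMap.trace ℝ E ∘ₗ ContinuousLinearMap.coeLM ℝ)

lemma traceCLM_apply (L : E →L[ℝ] E) : traceCLM L = LinearMap.trace ℝ E L := rfl

noncomputable def divergence (f : E → E) (x : E) : ℝ := traceCLM (fderiv ℝ f x)

variable {ψ F : E → E} {x : E}

lemma hasFDerivAt_divergence (hψ : ContDiffAt ℝ 2 ψ x) :
    HasFDerivAt (divergence ψ) (traceCLM.comp (fderiv ℝ (fderiv ℝ ψ) x)) x :=
  (traceCLM (E := E)).hasFDerivAt.comp x
    ((hψ.fderiv_right le_rfl).differentiableAt one_ne_zero).hasFDerivAt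

lemma contDiff_divergence (hψ : ContDiff ℝ 2 ψ) : ContDiff ℝ 1 (divergence ψ) :=
  traceCLM.contDiff.comp (hψ.fderiv_right le_rfl)

lemma divergence_divergence_smul_sub_fderiv_apply (hψ : ContDiffAt ℝ 2 ψ x)
    (hF : DifferentiableAt ℝ F x) :
    divergence (fun y => divergence ψ y • F y - fderiv ℝ ψ y (F y)) x =
      divergence F x * divergence ψ x - traceCLM (fderiv ℝ ψ x ∘L fderiv ℝ F x) := by
  have hsymm : IsSymmSndFDerivAt ℝ ψ x := hψ.isSymmSndFDerivAt (by simp)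
  have hDψ := ((hψ.fderiv_right le_rfl).differentiableAt one_ne_zero).hasFDerivAt
  have hG : HasFDerivAt (fun y => divergence ψ y • F y - fderiv ℝ ψ y (F y)) _ x :=
    ((hasFDerivAt_divergence hψ).smul hF.hasFDerivAt).sub (hDψ.clm_apply hF.hasFDerivAt)
  have hflip : (fderiv ℝ (fderiv ℝ ψ) x).flip (F x) = fderiv ℝ (fderiv ℝ ψ) x (F x) := by
    ext v
    exact hsymm v (F x)
  rw [divergence, hG.fderiv, hflip]
  simp [traceCLM_apply, divergence, mul_comm]

end Divergence

lemma inner_smul_smul_sub_apply_smul_of_norm_eq_one {E : Type*} [NormedAddCommGroup E]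
    [InnerProductSpace ℝ E] (L : E →L[ℝ] E) (a c : ℝ) {v : E} (hv : ‖v‖ = 1) :
    ⟪a • (c • v) - L (c • v), v⟫ = c * (a - ⟪L v, v⟫) := by
  rw [inner_sub_left, map_smul, real_inner_smul_left, real_inner_smul_left, real_inner_smul_left,
    real_inner_self_eq_norm_sq, hv]
  ring

section Euclidean

variable {ι : Type*} [Fintype ι]

lemma EuclideanSpace.inner_eq_sum_mul (w v : EuclideanSpace ℝ ι) : ⟪w, v⟫ = ∑ r, w r * v r := by
  simp [PiLp.inner_apply, mul_comm]

variable [DecidableEq ι]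

lemma EuclideanSpace.apply_eq_sum_smul (L : EuclideanSpace ℝ ι →L[ℝ] EuclideanSpace ℝ ι)
    (v : EuclideanSpace ℝ ι) : L v = ∑ t, v t • L (EuclideanSpace.single t 1) := by
  conv_lhs => rw [← (EuclideanSpace.basisFun ι ℝ).sum_repr v]
  simp

lemma traceCLM_eq_sum (L : EuclideanSpace ℝ ι →L[ℝ] EuclideanSpace ℝ ι) :
    traceCLM L = ∑ i, L (EuclideanSpace.single i 1) i := by
  simp [traceCLM_apply, LinearMap.trace_eq_matrix_trace ℝ (EuclideanSpace.basisFun ι ℝ).toBasis,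
    Matrix.trace, LinearMap.toMatrix_apply]

lemma traceCLM_comp_eq_sum (A B : EuclideanSpace ℝ ι →L[ℝ] EuclideanSpace ℝ ι) :
    traceCLM (B ∘L A) =
      ∑ i, ∑ t, A (EuclideanSpace.single t 1) i * B (EuclideanSpace.single i 1) t := by
  rw [traceCLM_eq_sum, Finset.sum_comm]
  refine Finset.sum_congr rfl fun t _ => ?_
  rw [ContinuousLinearMap.comp_apply, EuclideanSpace.apply_eq_sum_smul B]
  simp

lemma divergence_eq_sum (f : EuclideanSpace ℝ ι → EuclideanSpace ℝ ι) (x : EuclideanSpace ℝ ι) :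
    divergence f x = ∑ i, fderiv ℝ f x (EuclideanSpace.single i 1) i :=
  traceCLM_eq_sum _

end Euclidean

theorem stmt19_general {n : ℕ} (Ω : Set (EuclideanSpace ℝ (Fin n)))
    (σb : Measure (EuclideanSpace ℝ (Fin n)))
    (hsupp : ∀ᵐ x ∂σb, x ∈ frontier Ω)
    (ν : EuclideanSpace ℝ (Fin n) → EuclideanSpace ℝ (Fin n))
    (hν : ∀ x ∈ frontier Ω, ‖ν x‖ = 1)
    -- the divergence (Gauss–Green) theorem on `Ω` with outward normal `ν`
    (hGG : ∀ f : EuclideanSpace ℝ (Fin n) → EuclideanSpace ℝ (Fin n), ContDiff ℝ 1 f →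
      (∫ x in Ω, ∑ i : Fin n, fderiv ℝ f x (EuclideanSpace.single i 1) i) =
        ∫ x, ⟪f x, ν x⟫ ∂σb)
    (ψ : EuclideanSpace ℝ (Fin n) → EuclideanSpace ℝ (Fin n)) (hψ : ContDiff ℝ 2 ψ)
    (u φ : EuclideanSpace ℝ (Fin n) → ℝ) (hu : ContDiff ℝ 2 u) (hφ : ContDiff ℝ 2 φ)
    (N : EuclideanSpace ℝ (Fin n) → EuclideanSpace ℝ (Fin n)) (hN : ContDiff ℝ 1 N)
    (hNν : ∀ x ∈ frontier Ω, N x = ν x)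
    (F : EuclideanSpace ℝ (Fin n) → EuclideanSpace ℝ (Fin n))
    (hF : F = fun x => (u x * φ x) • N x) :
    (∫ x in Ω,
        ((∑ i : Fin n, fderiv ℝ F x (EuclideanSpace.single i 1) i) *
            (∑ i : Fin n, fderiv ℝ ψ x (EuclideanSpace.single i 1) i) -
          ∑ i : Fin n, ∑ t : Fin n,
            fderiv ℝ F x (EuclideanSpace.single t 1) i *
              fderiv ℝ ψ x (EuclideanSpace.single i 1) t)) =
      ∫ x, u x * φ x *
        ((∑ i : Fin n, fderiv ℝ ψ x (EuclideanSpace.single i 1) i) -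
          ∑ r : Fin n, fderiv ℝ ψ x (ν x) r * ν x r) ∂σb := by
  have hF₁ : ContDiff ℝ 1 F := hF ▸ ((hu.of_le one_le_two).mul (hφ.of_le one_le_two)).smul hN
  set G := fun y => divergence ψ y • F y - fderiv ℝ ψ y (F y) with hG
  have hG₁ : ContDiff ℝ 1 G :=
    ((contDiff_divergence hψ).smul hF₁).sub ((hψ.fderiv_right le_rfl).clm_apply hF₁)
  simp only [← divergence_eq_sum, ← traceCLM_comp_eq_sum, ← EuclideanSpace.inner_eq_sum_mul]
    at hGG ⊢
  calc _ = ∫ x in Ω, divergence G x :=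
        integral_congr_ae (ae_of_all _ fun x => (divergence_divergence_smul_sub_fderiv_apply
          hψ.contDiffAt (hF₁.differentiable one_ne_zero x)).symm)
    _ = ∫ x, ⟪G x, ν x⟫ ∂σb := hGG G hG₁
    _ = _ := integral_congr_ae <| hsupp.mono fun x hx => by
        simp only [hG, hF, hNν x hx]
        exact inner_smul_smul_sub_apply_smul_of_norm_eq_one _ _ _ (hν x hx)

/-- Boundary identity (Lemma on `B_ψ`): let `Ω ⊂ ℝⁿ` be a bounded `C¹` domain with
outward unit normal `ν`, surface measure `σb` on `∂Ω` (for which the divergence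
theorem `hGG` holds), `ψ` a `C²` vector field, `u, φ ∈ C²`, and `F = uφN` where `N`
is a `C¹` extension of `ν`. Then
`∫_Ω [∂ᵢFᵢ div ψ − ∂_t Fᵢ ∂ᵢψ_t] dx = ∫_{∂Ω} uφ (div ψ − Σ_r ∂_ν ψ_r ν_r) dσ`. -/
theorem stmt19 {n : ℕ} (Ω : Set (EuclideanSpace ℝ (Fin n))) (hΩ : IsOpen Ω)
    (hΩb : Bornology.IsBounded Ω)
    (σb : Measure (EuclideanSpace ℝ (Fin n)))
    (hsupp : ∀ᵐ x ∂σb, x ∈ frontier Ω)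
    (ν : EuclideanSpace ℝ (Fin n) → EuclideanSpace ℝ (Fin n))
    (hν : ∀ x ∈ frontier Ω, ‖ν x‖ = 1)
    -- the divergence (Gauss–Green) theorem on `Ω` with outward normal `ν`
    (hGG : ∀ f : EuclideanSpace ℝ (Fin n) → EuclideanSpace ℝ (Fin n), ContDiff ℝ 1 f →
      (∫ x in Ω, ∑ i : Fin n, fderiv ℝ f x (EuclideanSpace.single i 1) i) =
        ∫ x, ⟪f x, ν x⟫ ∂σb)
    (ψ : EuclideanSpace ℝ (Fin n) → EuclideanSpace ℝ (Fin n)) (hψ : ContDiff ℝ 2 ψ)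
    (u φ : EuclideanSpace ℝ (Fin n) → ℝ) (hu : ContDiff ℝ 2 u) (hφ : ContDiff ℝ 2 φ)
    (N : EuclideanSpace ℝ (Fin n) → EuclideanSpace ℝ (Fin n)) (hN : ContDiff ℝ 1 N)
    (hNν : ∀ x ∈ frontier Ω, N x = ν x)
    (F : EuclideanSpace ℝ (Fin n) → EuclideanSpace ℝ (Fin n))
    (hF : F = fun x => (u x * φ x) • N x) :
    (∫ x in Ω,
        ((∑ i : Fin n, fderiv ℝ F x (EuclideanSpace.single i 1) i) *
            (∑ i : Fin n, fderiv ℝ ψ x (EuclideanSpace.single i 1) i) -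
          ∑ i : Fin n, ∑ t : Fin n,
            fderiv ℝ F x (EuclideanSpace.single t 1) i *
              fderiv ℝ ψ x (EuclideanSpace.single i 1) t)) =
      ∫ x, u x * φ x *
        ((∑ i : Fin n, fderiv ℝ ψ x (EuclideanSpace.single i 1) i) -
          ∑ r : Fin n, fderiv ℝ ψ x (ν x) r * ν x r) ∂σb :=
  stmt19_general Ω σb hsupp ν hν hGG ψ hψ u φ hu hφ N hN hNν F hF
end
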